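/- arXiv:2111.02547 — 2 statements merged into one kernel-verified Lean document; each statement's English description precedes it below -/
import Mathlib

section
/- Let f ∈ Cu(G), let A be a van Hove sequence, let χ_1, …, χ_k be characters of G and c_1, …, c_k ∈ ℂ, and set P := c_1 χ_1 + … + c_k χ_k. If for each 1 ≤ j ≤ k the Fourier–Bohr coefficient c_{χ_j}^A(f) exists and c_{χ_j}^A(f) = 0, then the Eberlein convolutions f ⊛_A P̃ and P ⊛_A f̃ exist and f ⊛_A P̃ = P ⊛_A f̃ = 0. -/
open MeasureTheory Filter Topology Pointwise ComplexConjugate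
open scoped BigOperators

noncomputable section

variable {G : Type*} [AddCommGroup G] [UniformSpace G] [IsUniformAddGroup G]
  [LocallyCompactSpace G] [SecondCountableTopology G]
  [MeasurableSpace G] [BorelSpace G]

/-- The van Hove `K`-boundary of a set `B`:
`∂^K B = (closure (B+K) \ B) ∪ (((G \ B) - K) ∩ closure B)`. -/
def vhBoundary (K B : Set G) : Set G :=
  (closure (B + K) \ B) ∪ ((Bᶜ - K) ∩ closure B)

/-- `A` is a van Hove sequence for the Haar measure `μ`: a sequence of compact sets of
positive measure such that for every compact `K` the relative measure of the van Hove
boundary tends to `0`. -/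
def IsVanHove (μ : Measure G) (A : ℕ → Set G) : Prop :=
  (∀ n, IsCompact (A n)) ∧ (∀ n, 0 < μ (A n)) ∧
    ∀ K : Set G, IsCompact K →
      Tendsto (fun n => μ (vhBoundary K (A n)) / μ (A n)) atTop (nhds 0)

/-- `f ∈ Cu(G)`: bounded and uniformly continuous. -/
def IsCu (f : G → ℂ) : Prop :=
  UniformContinuous f ∧ ∃ C : ℝ, ∀ x, ‖f x‖ ≤ C

/-- `χ` is a (continuous, unimodular) character of `G`, viewed as a `ℂ`-valued function. -/
def IsChar (χ : G → ℂ) : Prop :=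
  Continuous χ ∧ (∀ x, ‖χ x‖ = 1) ∧ ∀ x y, χ (x + y) = χ x * χ y

/-- `f̃(x) = conj (f (-x))`. -/
def tilde (f : G → ℂ) : G → ℂ := fun x => conj (f (-x))

/-- `(T_t f)(x) = f (x - t)`. -/
def shiftBy (t : G) (f : G → ℂ) : G → ℂ := fun x => f (x - t)

/-- Sup norm `‖f‖_∞`. -/
def supN (f : G → ℂ) : ℝ := ⨆ x, ‖f x‖

/-- The Fourier–Bohr coefficient `c_χ^A(f)` exists and equals `c`. -/
def FBTendsto (μ : Measure G) (A : ℕ → Set G) (χ f : G → ℂ) (c : ℂ) : Prop :=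
  Tendsto (fun n => (μ (A n)).toReal⁻¹ • ∫ t in A n, conj (χ t) * f t ∂μ)
    atTop (nhds c)

/-- The Fourier–Bohr coefficient of `f` at `χ` exists uniformly (w.r.t. `A`) with value `c`:
`lim_n |A_n|⁻¹ ∫_{x+A_n} conj (χ t) f t dθ(t) = c` uniformly in `x ∈ G`. -/
def FBUniform (μ : Measure G) (A : ℕ → Set G) (χ f : G → ℂ) (c : ℂ) : Prop :=
  TendstoUniformly
    (fun n (x : G) => (μ (A n)).toReal⁻¹ • ∫ t in x +ᵥ A n, conj (χ t) * f t ∂μ)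
    (fun _ => c) atTop

/-- The Eberlein convolution `f ⊛_A g` exists and equals `F`:
for every `t`, `lim_n |A_n|⁻¹ ∫_{A_n} f s · g (t - s) dθ(s) = F t`. -/
def EberleinTendsto (μ : Measure G) (A : ℕ → Set G) (f g F : G → ℂ) : Prop :=
  ∀ t : G, Tendsto (fun n => (μ (A n)).toReal⁻¹ • ∫ s in A n, f s * g (t - s) ∂μ)
    atTop (nhds (F t))

/-- The Besicovitch seminorm `‖f‖_{b,p,A}`. -/
def bNorm (μ : Measure G) (A : ℕ → Set G) (p : ℝ) (f : G → ℂ) : ℝ :=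
  Filter.limsup
    (fun n => ((μ (A n)).toReal⁻¹ * ∫ t in A n, ‖f t‖ ^ p ∂μ) ^ (1 / p)) atTop

/-- `P` is a trigonometric polynomial: a finite linear combination of characters. -/
def IsTrigPoly (P : G → ℂ) : Prop :=
  ∃ (k : ℕ) (c : Fin k → ℂ) (χ : Fin k → G → ℂ),
    (∀ j, IsChar (χ j)) ∧ P = fun x => ∑ j, c j * χ j x

/-- `f ∈ Bap^p_A(G)`: `f` can be approximated by trigonometric polynomials in `‖·‖_{b,p,A}`. -/
def BapP (μ : Measure G) (A : ℕ → Set G) (p : ℝ) (f : G → ℂ) : Prop :=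
  ∀ ε : ℝ, 0 < ε → ∃ P : G → ℂ, IsTrigPoly P ∧ bNorm μ A p (fun x => f x - P x) < ε

/-- `f` is amenable w.r.t. `A` with mean `c`:
`lim_n |A_n|⁻¹ ∫_{x+A_n} f dθ = c` uniformly in `x ∈ G`. -/
def Amenable (μ : Measure G) (A : ℕ → Set G) (f : G → ℂ) (c : ℂ) : Prop :=
  TendstoUniformly
    (fun n (x : G) => (μ (A n)).toReal⁻¹ • ∫ t in x +ᵥ A n, f t ∂μ)
    (fun _ => c) atTop

/-!
Since `P̃ (t - s) = ∑ j, conj (c j) * χ j t * conj (χ j s)`, the averages defining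
`(f ⊛ P̃) t` are linear combinations of the averages defining the Fourier–Bohr coefficients
`c_{χ j}(f) = 0`. Dually, `P (s) * f̃ (t - s) = ∑ j, c j * χ j t * (χ j * conj f) (s - t)`, so the
averages defining `(P ⊛ f̃) t` are combinations of averages of translates of `χ j * conj f`.
Along a van Hove sequence averages of bounded functions are translation invariant, so these
tend to `conj (c_{χ j}(f)) = 0` as well.
-/

open scoped ENNReal

section SetIntegral

variable {X E : Type*} [MeasurableSpace X] {μ : Measure X} [NormedAddCommGroup E]
  [NormedSpace ℝ E]

lemma measure_toMeasurable_sdiff_toMeasurable_le {s : Set X} (hs : μ s ≠ ∞) (t : Set X) :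
    μ (toMeasurable μ s \ toMeasurable μ t) ≤ μ (s \ t) := by
  have hmeas := (measurableSet_toMeasurable μ t).compl
  calc μ (toMeasurable μ s \ toMeasurable μ t)
      = μ.restrict (toMeasurable μ s) (toMeasurable μ t)ᶜ := by
        rw [Measure.restrict_apply hmeas, Set.inter_comm, Set.sdiff_eq]
    _ = μ (s \ toMeasurable μ t) := by
        rw [Measure.restrict_toMeasurable hs, Measure.restrict_apply hmeas, Set.inter_comm,
          Set.sdiff_eq]
    _ ≤ μ (s \ t) := measure_mono (Set.sdiff_subset_sdiff_right (subset_toMeasurable μ t))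

/-- `s` and `t` may be replaced by their measurable hulls, which carry the same restricted
measure. -/
lemma norm_setIntegral_sub_setIntegral_le {g : X → E} {C : ℝ} {s t : Set X}
    (hs : μ s ≠ ∞) (ht : μ t ≠ ∞) (hgs : IntegrableOn g s μ) (hgt : IntegrableOn g t μ)
    (hC : ∀ x, ‖g x‖ ≤ C) :
    ‖∫ x in s, g x ∂μ - ∫ x in t, g x ∂μ‖ ≤ C * (μ.real (s \ t) + μ.real (t \ s)) := by
  rcases isEmpty_or_nonempty X with hX | ⟨⟨x₀⟩⟩
  · simp [Set.eq_empty_of_isEmpty s, Set.eq_empty_of_isEmpty t]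
  set s' := toMeasurable μ s
  set t' := toMeasurable μ t
  have hs' : μ.restrict s' = μ.restrict s := Measure.restrict_toMeasurable hs
  have ht' : μ.restrict t' = μ.restrict t := Measure.restrict_toMeasurable ht
  have hdiff : ∀ {u : Set X}, μ u ≠ ∞ → ∀ v : Set X,
      ‖∫ x in toMeasurable μ u \ toMeasurable μ v, g x ∂μ‖ ≤ C * μ.real (u \ v) := by
    intro u hu v
    have hle := measure_toMeasurable_sdiff_toMeasurable_le hu v
    have huv : μ (u \ v) ≠ ∞ := (measure_mono Set.sdiff_subset).trans_lt hu.lt_top |>.ne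
    exact (norm_setIntegral_le_of_norm_le_const (hle.trans_lt huv.lt_top) fun x _ => hC x).trans
      (mul_le_mul_of_nonneg_left (ENNReal.toReal_mono huv hle) ((norm_nonneg _).trans (hC x₀)))
  have hgs' : IntegrableOn g s' μ := by rwa [IntegrableOn, hs']
  have hgt' : IntegrableOn g t' μ := by rwa [IntegrableOn, ht']
  rw [← hs', ← ht']
  calc ‖∫ x in s', g x ∂μ - ∫ x in t', g x ∂μ‖
      = ‖∫ x in s' \ t', g x ∂μ - ∫ x in t' \ s', g x ∂μ‖ := by
        rw [← integral_inter_add_sdiff (measurableSet_toMeasurable μ t) hgs',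
          ← integral_inter_add_sdiff (measurableSet_toMeasurable μ s) hgt', Set.inter_comm,
          add_sub_add_left_eq_sub]
    _ ≤ ‖∫ x in s' \ t', g x ∂μ‖ + ‖∫ x in t' \ s', g x ∂μ‖ := norm_sub_le _ _
    _ ≤ C * (μ.real (s \ t) + μ.real (t \ s)) := by
        rw [mul_add]; exact add_le_add (hdiff hs t) (hdiff ht s)

end SetIntegral

lemma setIntegral_comp_sub_right {M E : Type*} [AddGroup M] [MeasurableSpace M]
    [MeasurableAdd M] {μ : Measure M} [μ.IsAddRightInvariant] [NormedAddCommGroup E]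
    [NormedSpace ℝ E] (g : M → E) (s : Set M) (t : M) :
    ∫ x in s, g (x - t) ∂μ = ∫ x in (· - t) '' s, g x ∂μ :=
  ((measurePreserving_sub_right μ t).setIntegral_image_emb (measurableEmbedding_subRight t) g s).symm

lemma tendsto_average_finset_sum {M ι : Type*} [MeasurableSpace M] {μ : Measure M}
    {B : ℕ → Set M} (J : Finset ι) (c : ι → ℂ) {h : ι → M → ℂ} {L : ι → ℂ}
    (hint : ∀ j ∈ J, ∀ n, IntegrableOn (h j) (B n) μ)
    (hlim : ∀ j ∈ J,
      Tendsto (fun n => (μ (B n)).toReal⁻¹ • ∫ s in B n, h j s ∂μ) atTop (𝓝 (L j))) :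
    Tendsto (fun n => (μ (B n)).toReal⁻¹ • ∫ s in B n, ∑ j ∈ J, c j * h j s ∂μ) atTop
      (𝓝 (∑ j ∈ J, c j * L j)) := by
  refine (tendsto_finsetSum J fun j hj => (hlim j hj).const_mul (c j)).congr fun n => ?_
  rw [integral_finsetSum J fun j hj => (hint j hj n).const_mul (c j), Finset.smul_sum]
  simp_rw [integral_const_mul, mul_smul_comm]

section VanHove

variable {G : Type*} [AddCommGroup G] [UniformSpace G]

lemma image_sub_sdiff_subset_vhBoundary (B : Set G) (t : G) :
    (· - t) '' B \ B ⊆ vhBoundary {t, -t} B := by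
  rintro _ ⟨⟨x, hx, rfl⟩, hxt⟩
  exact Or.inl ⟨subset_closure ⟨x, hx, -t, by simp, (sub_eq_add_neg x t).symm⟩, hxt⟩

lemma sdiff_image_sub_subset_vhBoundary (B : Set G) (t : G) :
    B \ (· - t) '' B ⊆ vhBoundary {t, -t} B := by
  rintro x ⟨hx, hxt⟩
  exact Or.inr ⟨⟨x + t, fun h => hxt ⟨x + t, h, by simp⟩, t, by simp, by simp⟩, subset_closure hx⟩

lemma measure_vhBoundary_lt_top [IsTopologicalAddGroup G] [MeasurableSpace G] {μ : Measure G}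
    [IsFiniteMeasureOnCompacts μ] {K B : Set G} (hK : IsCompact K) (hB : IsCompact B) :
    μ (vhBoundary K B) < ∞ :=
  (measure_mono (Set.union_subset_union Set.sdiff_subset Set.inter_subset_right)).trans_lt
    (measure_union_lt_top (hB.add hK).closure.measure_lt_top hB.closure.measure_lt_top)

/-- Translating `A n` by `t` changes it only inside the van Hove boundary `∂^{±t} (A n)`. -/
theorem IsVanHove.tendsto_average_comp_sub_right [IsTopologicalAddGroup G] [MeasurableSpace G]
    [BorelSpace G] {μ : Measure G} [IsFiniteMeasureOnCompacts μ]
    [μ.IsAddRightInvariant] {A : ℕ → Set G} (hA : IsVanHove μ A) {g : G → ℂ}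
    (hg : Continuous g) {C : ℝ} (hC : ∀ x, ‖g x‖ ≤ C) (t : G) {L : ℂ}
    (hL : Tendsto (fun n => (μ (A n)).toReal⁻¹ • ∫ s in A n, g s ∂μ) atTop (𝓝 L)) :
    Tendsto (fun n => (μ (A n)).toReal⁻¹ • ∫ s in A n, g (s - t) ∂μ) atTop (𝓝 L) := by
  obtain ⟨hcomp, -, hbdry⟩ := hA
  set K : Set G := {t, -t}
  have hK : IsCompact K := (Set.toFinite K).isCompact
  have hint : ∀ {S : Set G}, IsCompact S → IntegrableOn g S μ := fun hS =>
    Measure.integrableOn_of_bounded hS.measure_lt_top.ne hg.aestronglyMeasurable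
      (M := C) (ae_of_all _ hC)
  have hdiff : ∀ n, ‖(μ (A n)).toReal⁻¹ • ∫ s in A n, g (s - t) ∂μ
      - (μ (A n)).toReal⁻¹ • ∫ s in A n, g s ∂μ‖
      ≤ 2 * C * (μ (vhBoundary K (A n)) / μ (A n)).toReal := by
    intro n
    have hS : IsCompact ((· - t) '' A n) := (hcomp n).image (continuous_sub_right t)
    have hb := (measure_vhBoundary_lt_top (μ := μ) hK (hcomp n)).ne
    have hI := norm_setIntegral_sub_setIntegral_le hS.measure_lt_top.ne
      (hcomp n).measure_lt_top.ne (hint hS) (hint (hcomp n)) hC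
    rw [← smul_sub, setIntegral_comp_sub_right, norm_smul,
      Real.norm_of_nonneg (inv_nonneg.2 ENNReal.toReal_nonneg), ENNReal.toReal_div]
    calc (μ (A n)).toReal⁻¹ * ‖∫ x in (· - t) '' A n, g x ∂μ - ∫ s in A n, g s ∂μ‖
        ≤ (μ (A n)).toReal⁻¹ * (C * (μ.real (vhBoundary K (A n))
            + μ.real (vhBoundary K (A n)))) := by
          have hC0 : 0 ≤ C := (norm_nonneg _).trans (hC t)
          refine mul_le_mul_of_nonneg_left (hI.trans (mul_le_mul_of_nonneg_left ?_ hC0))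
            (by positivity)
          exact add_le_add (measureReal_mono (image_sub_sdiff_subset_vhBoundary (A n) t) hb)
            (measureReal_mono (sdiff_image_sub_subset_vhBoundary (A n) t) hb)
      _ = 2 * C * ((μ (vhBoundary K (A n))).toReal / (μ (A n)).toReal) := by
          rw [measureReal_def]; ring
  have hratio : Tendsto (fun n => 2 * C * (μ (vhBoundary K (A n)) / μ (A n)).toReal) atTop
      (𝓝 0) := by
    simpa using ((ENNReal.tendsto_toReal ENNReal.zero_ne_top).comp (hbdry K hK)).const_mul (2 * C)
  simpa using (squeeze_zero_norm hdiff hratio).add hL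

end VanHove

section Eberlein

variable {G : Type*} [AddCommGroup G]

lemma tilde_finset_sum {ι : Type*} (J : Finset ι) (c : ι → ℂ) (g : ι → G → ℂ) :
    tilde (fun x => ∑ j ∈ J, c j * g j x) = fun x => ∑ j ∈ J, conj (c j) * tilde (g j) x := by
  funext x
  simp [tilde, map_sum]

variable [UniformSpace G] {A : ℕ → Set G}

lemma Continuous.tilde [IsTopologicalAddGroup G] {f : G → ℂ} (hf : Continuous f) :
    Continuous (tilde f) :=
  Complex.continuous_conj.comp (hf.comp continuous_neg)

lemma IsChar.conj_apply_sub {χ : G → ℂ} (hχ : IsChar χ) (s t : G) :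
    conj (χ (s - t)) = χ t * conj (χ s) := by
  have h := hχ.2.2 (s - t) t
  rw [sub_add_cancel] at h
  rw [h, map_mul, mul_left_comm, Complex.mul_conj', hχ.2.1]
  simp

lemma IsChar.apply_eq_mul_apply_sub {χ : G → ℂ} (hχ : IsChar χ) (s t : G) :
    χ s = χ t * χ (s - t) := by
  rw [← hχ.2.2, add_sub_cancel]

theorem FBTendsto.eberleinTendsto_tilde_char [MeasurableSpace G] {μ : Measure G}
    {χ f : G → ℂ} {c : ℂ} (hχ : IsChar χ) (h : FBTendsto μ A χ f c) :
    EberleinTendsto μ A f (tilde χ) (fun t => χ t * c) := by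
  intro t
  have hpt : ∀ s, f s * tilde χ (t - s) = χ t * (conj (χ s) * f s) := fun s => by
    rw [tilde, neg_sub, hχ.conj_apply_sub]; ring
  refine (Tendsto.const_mul (χ t) h).congr fun n => ?_
  simp_rw [hpt, integral_const_mul, mul_smul_comm]

theorem FBTendsto.eberleinTendsto_char_tilde [IsTopologicalAddGroup G] [MeasurableSpace G]
    [BorelSpace G] {μ : Measure G} [IsFiniteMeasureOnCompacts μ] [μ.IsAddRightInvariant]
    {χ f : G → ℂ} {c : ℂ} (hA : IsVanHove μ A) (hχ : IsChar χ) (hf : Continuous f) {C : ℝ}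
    (hC : ∀ x, ‖f x‖ ≤ C) (h : FBTendsto μ A χ f c) :
    EberleinTendsto μ A χ (tilde f) (fun t => χ t * conj c) := by
  intro t
  have hconj : Tendsto (fun n => (μ (A n)).toReal⁻¹ • ∫ s in A n, χ s * conj (f s) ∂μ) atTop
      (𝓝 (conj c)) := by
    refine ((Complex.continuous_conj.tendsto c).comp h).congr fun n => ?_
    simp [← integral_conj]
  have hbound : ∀ x, ‖χ x * conj (f x)‖ ≤ C := fun x => by
    rw [norm_mul, hχ.2.1, one_mul, Complex.norm_conj]; exact hC x
  have hshift := hA.tendsto_average_comp_sub_right (g := fun s => χ s * conj (f s))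
    (hχ.1.mul (Complex.continuous_conj.comp hf)) hbound t hconj
  have hpt : ∀ s, χ s * tilde f (t - s) = χ t * (χ (s - t) * conj (f (s - t))) := fun s => by
    rw [tilde, neg_sub, hχ.apply_eq_mul_apply_sub s t, mul_assoc]
  refine (hshift.const_mul (χ t)).congr fun n => ?_
  simp_rw [hpt, integral_const_mul, mul_smul_comm]

section Linear

variable [IsTopologicalAddGroup G] [MeasurableSpace G] [OpensMeasurableSpace G] {μ : Measure G}
  [IsLocallyFiniteMeasure μ] {ι : Type*} {J : Finset ι}

theorem EberleinTendsto.finset_sum_left (hA : ∀ n, IsCompact (A n)) (c : ι → ℂ)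
    {f F : ι → G → ℂ} {g : G → ℂ} (hf : ∀ j ∈ J, Continuous (f j)) (hg : Continuous g)
    (h : ∀ j ∈ J, EberleinTendsto μ A (f j) g (F j)) :
    EberleinTendsto μ A (fun x => ∑ j ∈ J, c j * f j x) g (fun t => ∑ j ∈ J, c j * F j t) := by
  intro t
  refine (tendsto_average_finset_sum J c (fun j hj n => ?_) fun j hj => h j hj t).congr
    fun n => ?_
  · exact ((hf j hj).mul (hg.comp (continuous_sub_left t))).locallyIntegrable
      |>.integrableOn_isCompact (hA n)
  · simp_rw [Finset.sum_mul, mul_assoc]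

theorem EberleinTendsto.finset_sum_right (hA : ∀ n, IsCompact (A n)) (c : ι → ℂ)
    {f : G → ℂ} {g F : ι → G → ℂ} (hf : Continuous f) (hg : ∀ j ∈ J, Continuous (g j))
    (h : ∀ j ∈ J, EberleinTendsto μ A f (g j) (F j)) :
    EberleinTendsto μ A f (fun x => ∑ j ∈ J, c j * g j x) (fun t => ∑ j ∈ J, c j * F j t) := by
  intro t
  refine (tendsto_average_finset_sum J c (fun j hj n => ?_) fun j hj => h j hj t).congr
    fun n => ?_
  · exact (hf.mul ((hg j hj).comp (continuous_sub_left t))).locallyIntegrable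
      |>.integrableOn_isCompact (hA n)
  · simp_rw [Finset.mul_sum, mul_left_comm]

end Linear

end Eberlein

/-- if all Fourier–Bohr coefficients of `f` at the characters occurring in
the trigonometric polynomial `P = ∑ c_j χ_j` exist and vanish, then `f ⊛_A P̃` and
`P ⊛_A f̃` exist and vanish. -/
theorem stmt12 (μ : Measure G) [μ.IsAddHaarMeasure] (A : ℕ → Set G)
    (hA : IsVanHove μ A) (f : G → ℂ) (hf : IsCu f)
    (k : ℕ) (c : Fin k → ℂ) (χ : Fin k → G → ℂ) (hχ : ∀ j, IsChar (χ j))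
    (h : ∀ j, FBTendsto μ A (χ j) f 0) :
    EberleinTendsto μ A f (tilde (fun x => ∑ j, c j * χ j x)) (fun _ => 0) ∧
    EberleinTendsto μ A (fun x => ∑ j, c j * χ j x) (tilde f) (fun _ => 0) := by
  obtain ⟨hfu, C, hC⟩ := hf
  have hfc : Continuous f := hfu.continuous
  constructor
  · rw [tilde_finset_sum]
    simpa using EberleinTendsto.finset_sum_right hA.1 (fun j => conj (c j)) hfc
      (fun j _ => (hχ j).1.tilde) fun j _ => (h j).eberleinTendsto_tilde_char (hχ j)
  · simpa using EberleinTendsto.finset_sum_left hA.1 c (fun j _ => (hχ j).1) hfc.tilde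
      fun j _ => (h j).eberleinTendsto_char_tilde hA (hχ j) hfc hC
end
end

section
/- Let f, g ∈ Cu(G) and let A be a van Hove sequence. If f ∈ Bap²_A(G) and g has null Fourier–Bohr spectrum with respect to A, then the Eberlein convolutions f ⊛_A g̃ and g ⊛_A f̃ exist and f ⊛_A g̃ = g ⊛_A f̃ = 0. -/
open MeasureTheory Filter Topology Pointwise ComplexConjugate
open scoped BigOperators

noncomputable section

variable {G : Type*} [AddCommGroup G] [UniformSpace G] [IsUniformAddGroup G]
  [LocallyCompactSpace G] [SecondCountableTopology G]
  [MeasurableSpace G] [BorelSpace G]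

/-!
`(f ⊛_A g̃)(t)` is the limit of `⨍_{A_n} f(s) · conj g(s - t) ds`. This average is linear in `f`
and, by Cauchy–Schwarz, bounded by `‖g‖_∞` times the `L²` mean of `f` over `A_n`; as `f` is a
`‖·‖_{b,2,A}`-limit of trigonometric polynomials, it suffices to treat a character `χ`. Writing
`χ(s) = χ(t) χ(s - t)` turns the average into the mean of a translate of `χ · conj g`. Van Hove
means are asymptotically translation invariant, and the mean of `χ · conj g` is the conjugate of a
Fourier–Bohr coefficient of `g`, hence tends to `0`. Finally, the averages defining
`(g ⊛_A f̃)(t)` are the conjugates of the means of a translate of `s ↦ f(s) · conj g(s + t)`,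
whose means are those defining `(f ⊛_A g̃)(-t)`.
-/

open scoped ENNReal

theorem tendsto_zero_of_forall_eventually_norm_sub_le {E ι : Type*} [NormedAddCommGroup E]
    {l : Filter ι} {u : ι → E}
    (h : ∀ ε > 0, ∃ v : ι → E, Tendsto v l (𝓝 0) ∧ ∀ᶠ i in l, ‖u i - v i‖ ≤ ε) :
    Tendsto u l (𝓝 0) := by
  refine Metric.tendsto_nhds.2 fun ε hε => ?_
  obtain ⟨v, hv, huv⟩ := h (ε / 2) (half_pos hε)
  filter_upwards [Metric.tendsto_nhds.1 hv (ε / 2) (half_pos hε), huv] with i hvi hi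
  rw [dist_zero_right] at hvi ⊢
  linarith [norm_sub_norm_le (u i) (v i)]

section Average

variable {α E : Type*} [MeasurableSpace α] {μ : Measure α} [NormedAddCommGroup E]
  [NormedSpace ℝ E] {s t : Set α}

theorem average_sub {f g : α → E} (hf : Integrable f μ) (hg : Integrable g μ) :
    ⨍ x, f x - g x ∂μ = ⨍ x, f x ∂μ - ⨍ x, g x ∂μ := by
  simp only [average_eq, integral_sub hf hg, smul_sub]

theorem average_finset_sum {ι : Type*} (I : Finset ι) {f : ι → α → E}
    (hf : ∀ i ∈ I, Integrable (f i) μ) :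
    ⨍ x, ∑ i ∈ I, f i x ∂μ = ∑ i ∈ I, ⨍ x, f i x ∂μ := by
  simp only [average_eq, integral_finsetSum I hf, Finset.smul_sum]

theorem average_const_mul {𝕜 : Type*} [RCLike 𝕜] (r : 𝕜) (f : α → 𝕜) :
    ⨍ x, r * f x ∂μ = r * ⨍ x, f x ∂μ := by
  simp only [average_eq, integral_const_mul, mul_smul_comm]

theorem average_conj {𝕜 : Type*} [RCLike 𝕜] (f : α → 𝕜) :
    ⨍ x, conj (f x) ∂μ = conj (⨍ x, f x ∂μ) := by
  simp only [average_eq, integral_conj, RCLike.real_smul_eq_coe_mul, map_mul, RCLike.conj_ofReal]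

theorem norm_setAverage_le_of_norm_le {f : α → E} {C : ℝ} (hC : 0 ≤ C)
    (hf : ∀ x ∈ s, ‖f x‖ ≤ C) : ‖⨍ x in s, f x ∂μ‖ ≤ C := by
  rw [setAverage_eq, norm_smul, norm_inv, Real.norm_of_nonneg measureReal_nonneg]
  rcases eq_top_or_lt_top (μ s) with hs | hs
  · simp [Measure.real, hs, hC]
  calc (μ.real s)⁻¹ * ‖∫ x in s, f x ∂μ‖ ≤ (μ.real s)⁻¹ * (C * μ.real s) :=
        mul_le_mul_of_nonneg_left (norm_setIntegral_le_of_norm_le_const hs hf)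
          (inv_nonneg.2 measureReal_nonneg)
    _ ≤ C := by
        rcases eq_or_ne (μ.real s) 0 with h0 | h0
        · simp [h0, hC]
        · rw [mul_comm C, ← mul_assoc, inv_mul_cancel₀ h0, one_mul]

theorem norm_setAverage_le_mul_sqrt {E' : Type*} [NormedAddCommGroup E'] {F : α → E}
    {h : α → E'} {C : ℝ} (hs0 : μ s ≠ 0) (hs : μ s ≠ ∞) (hh : MemLp h 2 (μ.restrict s))
    (hC : 0 ≤ C) (hF : ∀ x, ‖F x‖ ≤ C * ‖h x‖) :
    ‖⨍ x in s, F x ∂μ‖ ≤ C * √(⨍ x in s, ‖h x‖ ^ 2 ∂μ) := by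
  have : IsFiniteMeasure (μ.restrict s) := isFiniteMeasure_restrict.2 hs
  have hint : IntegrableOn (fun x => ‖h x‖) s μ := (hh.integrable one_le_two).norm
  have hint2 : IntegrableOn (fun x => ‖h x‖ ^ 2) s μ := hh.integrable_norm_pow two_ne_zero
  have jensen : (⨍ x in s, ‖h x‖ ∂μ) ^ 2 ≤ ⨍ x in s, ‖h x‖ ^ 2 ∂μ :=
    (convexOn_pow 2).map_set_average_le (continuous_pow 2).continuousOn isClosed_Ici hs0 hs
      (ae_of_all _ fun x => norm_nonneg (h x)) hint hint2
  have hmono : ‖⨍ x in s, F x ∂μ‖ ≤ ⨍ x in s, C * ‖h x‖ ∂μ := by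
    simp only [setAverage_eq, norm_smul, norm_inv, Real.norm_of_nonneg measureReal_nonneg,
      smul_eq_mul]
    refine mul_le_mul_of_nonneg_left ((norm_integral_le_integral_norm _).trans ?_)
      (inv_nonneg.2 measureReal_nonneg)
    exact integral_mono_of_nonneg (ae_of_all _ fun x => norm_nonneg _) (hint.const_mul C)
      (ae_of_all _ hF)
  calc ‖⨍ x in s, F x ∂μ‖ ≤ ⨍ x in s, C * ‖h x‖ ∂μ := hmono
    _ = C * ⨍ x in s, ‖h x‖ ∂μ := average_const_mul C _
    _ ≤ C * √(⨍ x in s, ‖h x‖ ^ 2 ∂μ) :=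
        mul_le_mul_of_nonneg_left ((le_abs_self _).trans (Real.abs_le_sqrt jensen)) hC

theorem norm_setIntegral_sub_setIntegral_le_s15 {f : α → E} {C : ℝ} (hs : MeasurableSet s)
    (ht : MeasurableSet t) (hsf : μ s ≠ ∞) (htf : μ t ≠ ∞) (hf : AEStronglyMeasurable f μ)
    (hC : ∀ x, ‖f x‖ ≤ C) :
    ‖∫ x in s, f x ∂μ - ∫ x in t, f x ∂μ‖ ≤ C * μ.real (symmDiff s t) := by
  have hbdd : ∀ u, μ u ≠ ∞ → IntegrableOn f u μ := fun u hu =>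
    Measure.integrableOn_of_bounded hu hf (ae_of_all _ hC)
  have hst : μ (s \ t) ≠ ∞ := measure_ne_top_of_subset Set.sdiff_subset hsf
  have hts : μ (t \ s) ≠ ∞ := measure_ne_top_of_subset Set.sdiff_subset htf
  rw [← integral_inter_add_sdiff ht (hbdd s hsf), ← integral_inter_add_sdiff hs (hbdd t htf),
    Set.inter_comm t s, add_sub_add_left_eq_sub, Set.symmDiff_def,
    measureReal_union disjoint_sdiff_sdiff (ht.diff hs) hst hts, mul_add]
  exact (norm_sub_le _ _).trans (add_le_add
    (norm_setIntegral_le_of_norm_le_const hst.lt_top fun x _ => hC x)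
    (norm_setIntegral_le_of_norm_le_const hts.lt_top fun x _ => hC x))

theorem exists_measurableSet_restrict_eq [TopologicalSpace α] [OpensMeasurableSpace α]
    {K : Set α} (hK : μ K ≠ ∞) :
    ∃ B, MeasurableSet B ∧ K ⊆ B ∧ B ⊆ closure K ∧ μ.restrict B = μ.restrict K := by
  refine ⟨toMeasurable μ K ∩ closure K,
    (measurableSet_toMeasurable μ K).inter isClosed_closure.measurableSet,
    Set.subset_inter (subset_toMeasurable μ K) subset_closure, Set.inter_subset_right,
    le_antisymm ?_ (Measure.restrict_mono (Set.subset_inter (subset_toMeasurable μ K)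
      subset_closure) le_rfl)⟩
  exact (Measure.restrict_mono Set.inter_subset_left le_rfl).trans_eq
    (Measure.restrict_toMeasurable hK)

end Average

section VanHove

variable {G : Type*} [AddCommGroup G] [UniformSpace G]

theorem IsVanHove.tendsto_measureReal_vhBoundary_div [MeasurableSpace G] {μ : Measure G}
    {A : ℕ → Set G} (hA : IsVanHove μ A) {K : Set G} (hK : IsCompact K) :
    Tendsto (fun n => μ.real (vhBoundary K (A n)) / μ.real (A n)) atTop (𝓝 0) := by
  simpa [Measure.real, Function.comp_def, ENNReal.toReal_div] using
    (ENNReal.tendsto_toReal ENNReal.zero_ne_top).comp (hA.2.2 K hK)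

variable [IsUniformAddGroup G]

theorem symmDiff_preimage_add_subset_vhBoundary {A B : Set G} (hAB : A ⊆ B)
    (hB : B ⊆ closure A) (t : G) : symmDiff ((· + t) ⁻¹' B) B ⊆ vhBoundary {t, -t} A := by
  rintro x (⟨hxt, hxB⟩ | ⟨hxB, hxt⟩)
  · refine Or.inl ⟨?_, fun hxA => hxB (hAB hxA)⟩
    simpa using map_mem_closure (continuous_add_const (-t)) (hB hxt)
      fun a ha => Set.add_mem_add ha (by simp : -t ∈ ({t, -t} : Set G))
  · have hx : (x + t) - t ∈ Aᶜ - {t, -t} :=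
      Set.sub_mem_sub (fun h => hxt (hAB h)) (by simp : t ∈ ({t, -t} : Set G))
    exact Or.inr ⟨by simpa using hx, hB hxB⟩

theorem measure_vhBoundary_ne_top [MeasurableSpace G] {μ : Measure G}
    [IsFiniteMeasureOnCompacts μ] {K B : Set G}
    (hK : IsCompact K) (hB : IsCompact B) : μ (vhBoundary K B) ≠ ∞ :=
  measure_ne_top_of_subset (fun _ hx => hx.imp And.left And.right)
    ((hB.add hK).closure.union hB.closure).measure_lt_top.ne

variable [MeasurableSpace G] [BorelSpace G] {μ : Measure G} {A : ℕ → Set G}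
  {E : Type*} [NormedAddCommGroup E] [NormedSpace ℝ E]

theorem norm_setAverage_comp_sub_sub_le [μ.IsAddRightInvariant] [IsFiniteMeasureOnCompacts μ]
    {F : G → E} {C : ℝ} (hF : AEStronglyMeasurable F μ) (hC : ∀ x, ‖F x‖ ≤ C) {K : Set G}
    (hK : IsCompact K) (t : G) :
    ‖⨍ s in K, F (s - t) ∂μ - ⨍ s in K, F s ∂μ‖
      ≤ C * (μ.real (vhBoundary {t, -t} K) / μ.real K) := by
  -- No separation axiom is assumed, so `K` need not be measurable.
  obtain ⟨B, hBm, hKB, hBcl, hres⟩ :=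
    exists_measurableSet_restrict_eq (hK.measure_lt_top (μ := μ)).ne
  have hBK : μ B = μ K := by
    rw [← Measure.restrict_apply_univ, hres, Measure.restrict_apply_univ]
  have hBfin : μ B ≠ ∞ := hBK ▸ hK.measure_lt_top.ne
  have hBK_real : μ.real B = μ.real K := by simp only [measureReal_def, hBK]
  have hsubst : ∫ s in B, F (s - t) ∂μ = ∫ s in (· + t) ⁻¹' B, F s ∂μ := by
    simpa using ((measurePreserving_add_right μ t).setIntegral_preimage_emb
      (Homeomorph.addRight t).measurableEmbedding (fun y => F (y - t)) B).symm
  have hsymm : ‖∫ s in (· + t) ⁻¹' B, F s ∂μ - ∫ s in B, F s ∂μ‖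
      ≤ C * μ.real (vhBoundary {t, -t} K) :=
    (norm_setIntegral_sub_setIntegral_le_s15 (hBm.preimage (measurable_add_const t)) hBm
      (by rwa [measure_preimage_add_right]) hBfin hF hC).trans
      (mul_le_mul_of_nonneg_left
        (measureReal_mono (symmDiff_preimage_add_subset_vhBoundary hKB hBcl t)
          (measure_vhBoundary_ne_top (Set.toFinite {t, -t}).isCompact hK))
        ((norm_nonneg _).trans (hC 0)))
  rw [← hres, setAverage_eq, setAverage_eq, ← smul_sub, hsubst, norm_smul, norm_inv,
    Real.norm_of_nonneg measureReal_nonneg, hBK_real, mul_div_assoc', div_eq_inv_mul]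
  exact mul_le_mul_of_nonneg_left hsymm (inv_nonneg.2 measureReal_nonneg)

theorem IsVanHove.tendsto_setAverage_comp_sub [μ.IsAddRightInvariant]
    [IsFiniteMeasureOnCompacts μ] (hA : IsVanHove μ A) {F : G → E} {C : ℝ} {c : E}
    (hF : AEStronglyMeasurable F μ) (hC : ∀ x, ‖F x‖ ≤ C)
    (hlim : Tendsto (fun n => ⨍ s in A n, F s ∂μ) atTop (𝓝 c)) (t : G) :
    Tendsto (fun n => ⨍ s in A n, F (s - t) ∂μ) atTop (𝓝 c) := by
  have hdiff : Tendsto (fun n => ⨍ s in A n, F (s - t) ∂μ - ⨍ s in A n, F s ∂μ) atTop (𝓝 0) :=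
    squeeze_zero_norm (fun n => norm_setAverage_comp_sub_sub_le hF hC (hA.1 n) t)
      (by simpa using ((hA.tendsto_measureReal_vhBoundary_div
        (Set.toFinite {t, -t}).isCompact).const_mul C))
  simpa using hdiff.add hlim

end VanHove

section Means

variable {G : Type*} [MeasurableSpace G] {μ : Measure G} {A : ℕ → Set G}

theorem eberleinTendsto_tilde_iff [AddCommGroup G] {f g F : G → ℂ} :
    EberleinTendsto μ A f (tilde g) F ↔
      ∀ t, Tendsto (fun n => ⨍ s in A n, f s * conj (g (s - t)) ∂μ) atTop (𝓝 (F t)) := by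
  simp only [EberleinTendsto, tilde, neg_sub, setAverage_eq]
  rfl

theorem eventually_sqrt_setAverage_lt_of_bNorm_lt {h : G → ℂ} {C ε : ℝ}
    (hC : ∀ x, ‖h x‖ ≤ C) (hε : bNorm μ A 2 h < ε) :
    ∀ᶠ n in atTop, √(⨍ x in A n, ‖h x‖ ^ 2 ∂μ) < ε := by
  have hbNorm : bNorm μ A 2 h = limsup (fun n => √(⨍ x in A n, ‖h x‖ ^ 2 ∂μ)) atTop := by
    simp only [bNorm, setAverage_eq, smul_eq_mul, Real.rpow_two, Real.sqrt_eq_rpow]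
    rfl
  refine eventually_lt_of_limsup_lt (hbNorm ▸ hε) (isBoundedUnder_of ⟨|C|, fun n => ?_⟩)
  have hmean : ⨍ x in A n, ‖h x‖ ^ 2 ∂μ ≤ C ^ 2 :=
    (Real.le_norm_self _).trans (norm_setAverage_le_of_norm_le (sq_nonneg C) fun x _ => by
      simpa using pow_le_pow_left₀ (norm_nonneg _) (hC x) 2)
  simpa [Real.sqrt_sq_eq_abs] using Real.sqrt_le_sqrt hmean

end Means

section TrigPoly

variable {G : Type*} [AddCommGroup G] [UniformSpace G] {P : G → ℂ}

theorem IsTrigPoly.continuous (hP : IsTrigPoly P) : Continuous P := by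
  obtain ⟨k, c, χ, hχ, rfl⟩ := hP
  exact continuous_finsetSum _ fun j _ => continuous_const.mul (hχ j).1

theorem IsTrigPoly.exists_norm_le (hP : IsTrigPoly P) : ∃ C, ∀ x, ‖P x‖ ≤ C := by
  obtain ⟨k, c, χ, hχ, rfl⟩ := hP
  refine ⟨∑ j, ‖c j‖, fun x => (norm_sum_le _ _).trans (Finset.sum_le_sum fun j _ => ?_)⟩
  rw [norm_mul, (hχ j).2.1, mul_one]

end TrigPoly

section NullSpectrum

variable {G : Type*} [AddCommGroup G] [UniformSpace G] [IsUniformAddGroup G]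
  [MeasurableSpace G] [BorelSpace G] {μ : Measure G} [μ.IsAddRightInvariant]
  [IsFiniteMeasureOnCompacts μ] {A : ℕ → Set G} {f g : G → ℂ}

theorem IsVanHove.tendsto_setAverage_char_mul_conj_comp_sub (hA : IsVanHove μ A) {χ : G → ℂ}
    (hχ : IsChar χ) (hg : IsCu g) (hFB : FBTendsto μ A χ g 0) (t : G) :
    Tendsto (fun n => ⨍ s in A n, χ s * conj (g (s - t)) ∂μ) atTop (𝓝 0) := by
  obtain ⟨hχc, hχ1, hχadd⟩ := hχ
  obtain ⟨hgu, Cg, hCg⟩ := hg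
  have hFB' : Tendsto (fun n => ⨍ s in A n, conj (χ s) * g s ∂μ) atTop (𝓝 0) := by
    simp only [setAverage_eq]
    exact hFB
  have hmean : Tendsto (fun n => ⨍ s in A n, χ s * conj (g s) ∂μ) atTop (𝓝 0) := by
    simpa [Function.comp_def, ← average_conj] using
      (Complex.continuous_conj.tendsto 0).comp hFB'
  have hshift := hA.tendsto_setAverage_comp_sub (F := fun s => χ s * conj (g s))
    (hχc.mul (Complex.continuous_conj.comp hgu.continuous)).aestronglyMeasurable
    (fun x => by simpa [hχ1] using hCg x) hmean t
  simpa only [← average_const_mul, ← mul_assoc, ← hχadd, add_sub_cancel, mul_zero] using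
    hshift.const_mul (χ t)

theorem IsVanHove.tendsto_setAverage_trigPoly_mul_conj_comp_sub (hA : IsVanHove μ A)
    {P : G → ℂ} (hP : IsTrigPoly P) (hg : IsCu g)
    (hnull : ∀ χ : G → ℂ, IsChar χ → FBTendsto μ A χ g 0) (t : G) :
    Tendsto (fun n => ⨍ s in A n, P s * conj (g (s - t)) ∂μ) atTop (𝓝 0) := by
  obtain ⟨k, c, χ, hχ, rfl⟩ := hP
  obtain ⟨Cg, hCg⟩ := hg.2
  have hlim := tendsto_finsetSum Finset.univ fun j _ =>
    (hA.tendsto_setAverage_char_mul_conj_comp_sub (hχ j) hg (hnull _ (hχ j)) t).const_mul (c j)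
  simp only [mul_zero, Finset.sum_const_zero] at hlim
  refine hlim.congr fun n => ?_
  have hbound : ∀ j s, ‖c j * (χ j s * conj (g (s - t)))‖ ≤ ‖c j‖ * Cg := fun j s => by
    simpa [(hχ j).2.1] using mul_le_mul_of_nonneg_left (hCg (s - t)) (norm_nonneg (c j))
  have hint : ∀ j ∈ Finset.univ,
      IntegrableOn (fun s => c j * (χ j s * conj (g (s - t)))) (A n) μ := fun j _ =>
    Measure.integrableOn_of_bounded (hA.1 n).measure_lt_top.ne
      (continuous_const.mul ((hχ j).1.mul (Complex.continuous_conj.comp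
        (hg.1.continuous.comp (continuous_sub_right t))))).aestronglyMeasurable
      (ae_of_all _ (hbound j))
  simp only [← average_const_mul]
  rw [← average_finset_sum _ hint]
  simp only [Finset.sum_mul, mul_assoc]

theorem IsVanHove.tendsto_setAverage_mul_conj_comp_sub_of_bapP (hA : IsVanHove μ A)
    (hf : IsCu f) (hg : IsCu g) (hBap : BapP μ A 2 f)
    (hnull : ∀ χ : G → ℂ, IsChar χ → FBTendsto μ A χ g 0) (t : G) :
    Tendsto (fun n => ⨍ s in A n, f s * conj (g (s - t)) ∂μ) atTop (𝓝 0) := by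
  obtain ⟨Cf, hCf⟩ := hf.2
  obtain ⟨Cg, hCg⟩ := hg.2
  have hCg0 : 0 ≤ Cg := (norm_nonneg _).trans (hCg 0)
  have hgt : Continuous fun s => conj (g (s - t)) :=
    Complex.continuous_conj.comp (hg.1.continuous.comp (continuous_sub_right t))
  refine tendsto_zero_of_forall_eventually_norm_sub_le fun ε hε => ?_
  obtain ⟨P, hP, hfP⟩ := hBap (ε / (Cg + 1)) (by positivity)
  obtain ⟨CP, hCP⟩ := hP.exists_norm_le
  refine ⟨_, hA.tendsto_setAverage_trigPoly_mul_conj_comp_sub hP hg hnull t, ?_⟩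
  have hfP_le : ∀ x, ‖f x - P x‖ ≤ Cf + CP := fun x =>
    (norm_sub_le _ _).trans (add_le_add (hCf x) (hCP x))
  filter_upwards [eventually_sqrt_setAverage_lt_of_bNorm_lt hfP_le hfP] with n hn
  have hfin : μ (A n) ≠ ∞ := (hA.1 n).measure_lt_top.ne
  have : IsFiniteMeasure (μ.restrict (A n)) := isFiniteMeasure_restrict.2 hfin
  have hmem : MemLp (fun s => f s - P s) 2 (μ.restrict (A n)) :=
    .of_bound (hf.1.continuous.sub hP.continuous).aestronglyMeasurable _ (ae_of_all _ hfP_le)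
  have hint : ∀ {h : G → ℂ} {C : ℝ}, Continuous h → (∀ x, ‖h x‖ ≤ C) →
      Integrable (fun s => h s * conj (g (s - t))) (μ.restrict (A n)) := fun hh hC =>
    Measure.integrableOn_of_bounded hfin (hh.mul hgt).aestronglyMeasurable
      (ae_of_all _ fun s => norm_mul_le_of_le (hC s) ((Complex.norm_conj _).trans_le (hCg _)))
  rw [← average_sub (hint hf.1.continuous hCf) (hint hP.continuous hCP)]
  calc ‖⨍ s in A n, f s * conj (g (s - t)) - P s * conj (g (s - t)) ∂μ‖
      ≤ Cg * √(⨍ s in A n, ‖f s - P s‖ ^ 2 ∂μ) :=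
        norm_setAverage_le_mul_sqrt (hA.2.1 n).ne' hfin hmem hCg0 fun s => by
          rw [← sub_mul, norm_mul, mul_comm, Complex.norm_conj]
          exact mul_le_mul_of_nonneg_right (hCg _) (norm_nonneg _)
    _ ≤ Cg * (ε / (Cg + 1)) := by gcongr
    _ ≤ ε := by
        rw [mul_div_assoc', div_le_iff₀ (by positivity)]
        nlinarith

theorem IsVanHove.tendsto_setAverage_mul_conj_comp_sub_symm (hA : IsVanHove μ A)
    (hf : IsCu f) (hg : IsCu g)
    (h : ∀ t, Tendsto (fun n => ⨍ s in A n, f s * conj (g (s - t)) ∂μ) atTop (𝓝 0)) (t : G) :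
    Tendsto (fun n => ⨍ s in A n, g s * conj (f (s - t)) ∂μ) atTop (𝓝 0) := by
  obtain ⟨Cf, hCf⟩ := hf.2
  obtain ⟨Cg, hCg⟩ := hg.2
  have hH : Tendsto (fun n => ⨍ s in A n, f s * conj (g (s + t)) ∂μ) atTop (𝓝 0) := by
    simpa using h (-t)
  have hbound : ∀ s, ‖f s * conj (g (s + t))‖ ≤ Cf * Cg := fun s =>
    norm_mul_le_of_le (hCf s) ((Complex.norm_conj _).trans_le (hCg _))
  have hshift := hA.tendsto_setAverage_comp_sub (F := fun s => f s * conj (g (s + t)))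
    (hf.1.continuous.mul (Complex.continuous_conj.comp
      (hg.1.continuous.comp (continuous_add_const t)))).aestronglyMeasurable hbound hH t
  simpa [Function.comp_def, ← average_conj, mul_comm] using
    (Complex.continuous_conj.tendsto 0).comp hshift

end NullSpectrum

/-- if `f ∈ Bap²_A(G)` and `g` has null Fourier–Bohr spectrum w.r.t. `A`,
then `f ⊛_A g̃` and `g ⊛_A f̃` exist and vanish. -/
theorem stmt15 (μ : Measure G) [μ.IsAddHaarMeasure] (A : ℕ → Set G)
    (hA : IsVanHove μ A) (f g : G → ℂ) (hf : IsCu f) (hg : IsCu g)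
    (hBap : BapP μ A 2 f)
    (hnull : ∀ χ : G → ℂ, IsChar χ → FBTendsto μ A χ g 0) :
    EberleinTendsto μ A f (tilde g) (fun _ => 0) ∧
    EberleinTendsto μ A g (tilde f) (fun _ => 0) := by
  have hfg := hA.tendsto_setAverage_mul_conj_comp_sub_of_bapP hf hg hBap hnull
  exact ⟨eberleinTendsto_tilde_iff.2 hfg,
    eberleinTendsto_tilde_iff.2 (hA.tendsto_setAverage_mul_conj_comp_sub_symm hf hg hfg)⟩
end
end
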